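/- arXiv:2303.11588 — 2 statements merged into one kernel-verified Lean document; each statement's English description precedes it below -/
import Mathlib

section
/- Let s, w be complex numbers with Re(s) > 2 and Re(w) > 2. Then Σ_{q ≥ 1} Σ_{m ≥ 1, m odd} τ(χ^{(4m)}, q)·q^{−s}·m^{−w} = −2^{−s}·(C_1(s,w; ψ_2, ψ_1) + C_1(s,w; ψ_{−2}, ψ_1)) + 4^{−s}·(C_1(s,w; ψ_1, ψ_0) + C_1(s,w; ψ_{−1}, ψ_0)) + C_1(s,w; ψ_1, ψ_{−1}) − C_1(s,w; ψ_{−1}, ψ_{−1}), where all series converge absolutely. -/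
open Complex

/-- The Gauss sum `τ(χ, q) = ∑_{j=0}^{n-1} χ(j) e(jq/n)` of a function `χ` regarded as a
character modulo `n`, at the integer `q`, where `e(z) = exp(2πiz)`. -/
noncomputable def tauChar (n : ℕ) (χ : ℕ → ℂ) (q : ℤ) : ℂ :=
  ∑ j ∈ Finset.range n, χ j * Complex.exp (2 * Real.pi * Complex.I * j * q / n)

/-- The quadratic character `χ_n = (·/n)` given by the Jacobi symbol, for odd positive `n`. -/
noncomputable def chiJacobi (n : ℕ) : ℕ → ℂ := fun m => (jacobiSym m n : ℂ)

/-- The character `χ^{(4m)}` modulo `4m`: it vanishes on even integers and takes the value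
given by the Jacobi symbol `(m/j)` at odd `j`. -/
noncomputable def chi4m (m : ℕ) : ℕ → ℂ := fun j => if Odd j then (jacobiSym m j : ℂ) else 0

/-- The normalized Gauss sum
`G(χ_n, q) = ((1−i)/2 + (−1/n)·(1+i)/2)·τ(χ_n, q)` for odd positive `n`. -/
noncomputable def GJacobi (n : ℕ) (q : ℤ) : ℂ :=
  ((1 - Complex.I) / 2 + (jacobiSym (-1) n : ℂ) * (1 + Complex.I) / 2) * tauChar n (chiJacobi n) q

/-- For `j ∈ {±1, ±2}`, the character `ψ_j`: zero on even integers, Jacobi symbol `(j/k)` on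
odd `k`. -/
noncomputable def psiJ (j : ℤ) : ℕ → ℂ := fun k => if Odd k then (jacobiSym j k : ℂ) else 0

/-- The primitive principal character `ψ_0`, the constant function `1`. -/
noncomputable def psi0 : ℕ → ℂ := fun _ => 1

/-- The term of the double Dirichlet series `C_1(s, w; ψ, ψ')`. -/
noncomputable def C1term (s w : ℂ) (ψ ψ' : ℕ → ℂ) (lq : ℕ+ × ℕ+) : ℂ :=
  GJacobi lq.1 lq.2 * ψ lq.1 * ψ' lq.2 / (((lq.1 : ℕ) : ℂ) ^ w * ((lq.2 : ℕ) : ℂ) ^ s)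

/-- The double Dirichlet series `C_1(s, w; ψ, ψ') = ∑_{l,q ≥ 1} G(χ_l, q) ψ(l) ψ'(q) l^{−w} q^{−s}`. -/
noncomputable def C1 (s w : ℂ) (ψ ψ' : ℕ → ℂ) : ℂ := ∑' lq : ℕ+ × ℕ+, C1term s w ψ ψ' lq

/-!
Split `j mod 4m` by the Chinese remainder theorem as `j ≡ m u + 4 v`. Only odd `u` contribute,
and quadratic reciprocity turns `(m / m u + 4 v)` into `(v / m)` up to the sign `(−1/m)` for
`u = 1`, so `τ(χ^{(4m)}, q) = ((−1/m) i^q + (−i)^q) τ(χ_m, q)`. Moreover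
`G(χ_m, q) = c τ(χ_m, q)` where, because `(−1/m)² = 1`, `(1 + (−1/m)) c = 1 + (−1/m)` and
`(1 − (−1/m)) c = −i (1 − (−1/m))`. Writing `q` as odd, as twice an odd number, or as `4q'`,
and using `τ(χ_m, a q) = (a/m) τ(χ_m, q)`, each term of the left-hand side becomes a
combination of terms of the six series `C_1`. Absolute convergence comes from `|τ(χ, q)| ≤ n`.
-/

open Finset Function

theorem Finset.sum_range_eq_sum_of_injOn_mod {ι M : Type*} [AddCommMonoid M] {n : ℕ}
    {f : ℕ → M} (hf : Periodic f n) {s : Finset ι} {g : ι → ℕ} (hs : #s = n)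
    (hg : Set.InjOn (fun i => g i % n) s) :
    ∑ j ∈ range n, f j = ∑ i ∈ s, f (g i) := by
  classical
  rcases n.eq_zero_or_pos with rfl | hn
  · simp [card_eq_zero.mp hs]
  have himage : s.image (fun i => g i % n) = range n :=
    eq_of_subset_of_card_le (fun j hj => by
      obtain ⟨i, -, rfl⟩ := mem_image.mp hj; exact mem_range.mpr (Nat.mod_lt _ hn))
      (by rw [card_image_of_injOn hg, hs, card_range])
  rw [← himage, sum_image hg]
  exact sum_congr rfl fun i _ => hf.map_mod_nat (g i)

theorem Finset.sum_range_mul_eq_sum_sum_of_coprime {M : Type*} [AddCommMonoid M] {a b : ℕ}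
    (hab : a.Coprime b) {f : ℕ → M} (hf : Periodic f (a * b)) :
    ∑ j ∈ range (a * b), f j = ∑ u ∈ range a, ∑ v ∈ range b, f (b * u + a * v) := by
  rw [← sum_product']
  refine sum_range_eq_sum_of_injOn_mod hf (by simp) ?_
  rintro ⟨u, v⟩ huv ⟨u', v'⟩ huv' h
  simp only [coe_product, coe_range, Set.mem_prod, Set.mem_Iio] at huv huv'
  have h' : b * u + a * v ≡ b * u' + a * v' [MOD a * b] := h
  have hu : b * u ≡ b * u' [MOD a] := by
    simpa [Nat.ModEq, Nat.add_mul_mod_self_left] using h'.of_mul_right b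
  have hv : a * v ≡ a * v' [MOD b] := by
    simpa [Nat.ModEq, Nat.add_mul_mod_self_left, add_comm] using h'.of_mul_left a
  rw [(hu.cancel_left_of_coprime hab).eq_of_lt_of_lt huv.1 huv'.1,
    (hv.cancel_left_of_coprime hab.symm).eq_of_lt_of_lt huv.2 huv'.2]

theorem Finset.sum_range_comp_mul_of_coprime {M : Type*} [AddCommMonoid M] {a n : ℕ}
    (han : a.Coprime n) {f : ℕ → M} (hf : Periodic f n) :
    ∑ j ∈ range n, f (a * j) = ∑ j ∈ range n, f j :=
  (sum_range_eq_sum_of_injOn_mod hf (card_range n) fun _ hj _ hj' h =>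
    ((Nat.ModEq.cancel_left_of_coprime han.symm h).eq_of_lt_of_lt
      (mem_range.mp hj) (mem_range.mp hj'))).symm

theorem periodic_exp_two_pi_I_mul_div (n : ℕ) (q : ℤ) :
    Periodic (fun j : ℕ => exp (2 * Real.pi * I * j * q / n)) n := by
  intro j
  rcases eq_or_ne n 0 with rfl | hn
  · simp
  have hn' : (n : ℂ) ≠ 0 := Nat.cast_ne_zero.mpr hn
  have : 2 * Real.pi * I * ((j + n : ℕ) : ℂ) * q / n
      = 2 * Real.pi * I * j * q / n + q * (2 * Real.pi * I) := by
    push_cast; field_simp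
  simp only [this, exp_add, exp_int_mul_two_pi_mul_I, mul_one]

theorem norm_exp_two_pi_I_mul_div (j n : ℕ) (q : ℤ) :
    ‖exp (2 * Real.pi * I * j * q / n)‖ = 1 := by
  rw [norm_exp]
  simp

theorem exp_two_pi_I_mul_div_four (u q : ℕ) :
    exp (2 * Real.pi * I * u * (q : ℤ) / 4) = I ^ (u * q) := by
  rw [show 2 * Real.pi * I * u * ((q : ℤ) : ℂ) / 4 = (u * q : ℕ) * (Real.pi / 2 * I) by
    push_cast; ring, exp_nat_mul, exp_pi_div_two_mul_I]

theorem exp_two_pi_I_mul_add_div_four_mul {m : ℕ} (hm : m ≠ 0) (u v : ℕ) (q : ℤ) :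
    exp (2 * Real.pi * I * (m * u + 4 * v : ℕ) * q / (4 * m : ℕ)) =
      exp (2 * Real.pi * I * u * q / 4) * exp (2 * Real.pi * I * v * q / m) := by
  have hm' : (m : ℂ) ≠ 0 := Nat.cast_ne_zero.mpr hm
  rw [← exp_add]
  push_cast
  field_simp

theorem norm_jacobiSym_le (a : ℤ) (b : ℕ) : ‖(jacobiSym a b : ℂ)‖ ≤ 1 := by
  rcases jacobiSym.trichotomy a b with h | h | h <;> simp [h]

theorem jacobiSym_natCast_sq_eq_one {a m : ℕ} (ham : a.Coprime m) :
    (jacobiSym a m : ℂ) ^ 2 = 1 := by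
  exact_mod_cast jacobiSym.sq_one (by simpa [Int.gcd_natCast_natCast] using ham)

theorem jacobiSym_neg_one_eq_ite {m : ℕ} (hm : Odd m) :
    jacobiSym (-1) m = if m % 4 = 3 then -1 else 1 := by
  rw [jacobiSym.at_neg_one hm, ZMod.χ₄_nat_eq_if_mod_four]
  have := Nat.odd_iff.mp hm
  split_ifs <;> omega

theorem jacobiSym_neg_one_sq {m : ℕ} (hm : Odd m) : (jacobiSym (-1) m : ℂ) ^ 2 = 1 := by
  rw [jacobiSym_neg_one_eq_ite hm]
  split_ifs <;> norm_num

theorem I_pow_of_odd {q : ℕ} (hq : Odd q) : I ^ q = jacobiSym (-1) q * I := by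
  rw [jacobiSym_neg_one_eq_ite hq, ← Nat.div_add_mod q 4, pow_add, pow_mul, I_pow_four, one_pow,
    one_mul, Nat.mul_add_mod_self_left]
  rcases Nat.odd_mod_four_iff.mp (Nat.odd_iff.mp hq) with h | h <;> simp [h, pow_succ]

theorem jacobiSym_four {m : ℕ} (hm : Odd m) : jacobiSym 4 m = 1 :=
  jacobiSym.sq_one' (a := 2) (by simpa [Int.gcd] using Nat.coprime_two_left.mpr hm)

theorem jacobiSym_mul_add_four_mul_left {m : ℕ} (hm : Odd m) (u v : ℕ) :
    jacobiSym (m * u + 4 * v : ℕ) m = jacobiSym v m := by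
  rw [jacobiSym.mod_left' (a₂ := 4 * v) (by push_cast; simp [Int.add_emod, Int.mul_emod_right]),
    jacobiSym.mul_left, jacobiSym_four hm, one_mul]

theorem jacobiSym_mul_add_four_mul {m u : ℕ} (hm : Odd m) (hu : Odd u) (v : ℕ) :
    jacobiSym m (m * u + 4 * v) =
      (if m % 4 = 3 ∧ m * u % 4 = 3 then -1 else 1) * jacobiSym v m := by
  have hmu : Odd (m * u + 4 * v) := (hm.mul hu).add_even ((by decide : Even 4).mul_right v)
  rw [← jacobiSym.quadratic_reciprocity_if (Nat.odd_iff.mp hm) (Nat.odd_iff.mp hmu),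
    jacobiSym_mul_add_four_mul_left hm]
  simp only [Nat.add_mul_mod_self_left]
  split_ifs <;> simp

theorem chiJacobi_periodic (m : ℕ) : Periodic (chiJacobi m) m := fun j => by
  simp only [chiJacobi, Nat.cast_add]
  rw [jacobiSym.mod_left' (Int.add_emod_right _ _)]

theorem chi4m_periodic (m : ℕ) : Periodic (chi4m m) (4 * m) := fun j => by
  have hparity : Odd (j + 4 * m) ↔ Odd j := by
    simp [Nat.odd_add, (by decide : Even 4).mul_right m]
  by_cases hj : Odd j
  · simp only [chi4m, if_pos hj, if_pos (hparity.mpr hj)]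
    rw [jacobiSym.mod_right' m (hparity.mpr hj), jacobiSym.mod_right' m hj, Nat.add_mod_right]
  · simp [chi4m, hj, hparity]

theorem chi4m_mul_add_four_mul_of_even (m : ℕ) {u : ℕ} (hu : Even u) (v : ℕ) :
    chi4m m (m * u + 4 * v) = 0 :=
  if_neg (Nat.not_odd_iff_even.mpr ((hu.mul_left m).add ((by decide : Even 4).mul_right v)))

theorem chi4m_mul_add_four_mul_of_odd {m u : ℕ} (hm : Odd m) (hu : Odd u) (v : ℕ) :
    chi4m m (m * u + 4 * v) =
      (if m % 4 = 3 ∧ m * u % 4 = 3 then -1 else 1) * chiJacobi m v := by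
  rw [chi4m, if_pos ((hm.mul hu).add_even ((by decide : Even 4).mul_right v)),
    jacobiSym_mul_add_four_mul hm hu, chiJacobi]
  push_cast
  rfl

theorem psiJ_of_odd (j : ℤ) {k : ℕ} (hk : Odd k) : psiJ j k = jacobiSym j k := if_pos hk

theorem psiJ_of_not_odd (j : ℤ) {k : ℕ} (hk : ¬Odd k) : psiJ j k = 0 := if_neg hk

theorem norm_chi4m_le (m j : ℕ) : ‖chi4m m j‖ ≤ 1 := by
  unfold chi4m; split_ifs
  exacts [norm_jacobiSym_le _ _, by simp]

theorem norm_psiJ_le (a : ℤ) (k : ℕ) : ‖psiJ a k‖ ≤ 1 := by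
  unfold psiJ; split_ifs
  exacts [norm_jacobiSym_le _ _, by simp]

theorem norm_psi0_le (k : ℕ) : ‖psi0 k‖ ≤ 1 := by simp [psi0]

theorem periodic_tauChar_summand {n : ℕ} {χ : ℕ → ℂ} (hχ : Periodic χ n) (q : ℤ) :
    Periodic (fun j : ℕ => χ j * exp (2 * Real.pi * I * j * q / n)) n :=
  hχ.mul (periodic_exp_two_pi_I_mul_div n q)

theorem norm_tauChar_le {n : ℕ} {χ : ℕ → ℂ} (hχ : ∀ j, ‖χ j‖ ≤ 1) (q : ℤ) :
    ‖tauChar n χ q‖ ≤ n :=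
  calc ‖tauChar n χ q‖ ≤ ∑ j ∈ range n, ‖χ j * exp (2 * Real.pi * I * j * q / n)‖ :=
        norm_sum_le _ _
    _ ≤ ∑ _j ∈ range n, 1 := sum_le_sum fun j _ => by
        rw [norm_mul, norm_exp_two_pi_I_mul_div, mul_one]; exact hχ j
    _ = n := by simp

theorem norm_GJacobi_le (n : ℕ) (q : ℤ) : ‖GJacobi n q‖ ≤ 2 * n := by
  have hc : ‖(1 - I) / 2 + (jacobiSym (-1) n : ℂ) * (1 + I) / 2‖ ≤ 2 := by
    have h1 : ‖(1 - I) / 2‖ ≤ 1 := by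
      rw [norm_div]; have := norm_sub_le (1 : ℂ) I; simp at this ⊢; linarith
    have h2 : ‖(1 + I) / 2‖ ≤ 1 := by
      rw [norm_div]; have := norm_add_le (1 : ℂ) I; simp at this ⊢; linarith
    calc _ ≤ ‖(1 - I) / 2‖ + ‖(jacobiSym (-1) n : ℂ)‖ * ‖(1 + I) / 2‖ := by
          rw [mul_div_assoc, ← norm_mul]; exact norm_add_le _ _
      _ ≤ 1 + 1 * 1 := by gcongr; exact norm_jacobiSym_le _ _
      _ = 2 := by norm_num
  rw [GJacobi, norm_mul]
  exact mul_le_mul hc (norm_tauChar_le (fun j => norm_jacobiSym_le j n) q) (norm_nonneg _)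
    zero_le_two

theorem tauChar_chiJacobi_natCast_mul {a m : ℕ} (ham : a.Coprime m) (q : ℤ) :
    tauChar m (chiJacobi m) (a * q) = jacobiSym a m * tauChar m (chiJacobi m) q := by
  have hshift : tauChar m (chiJacobi m) q = jacobiSym a m * tauChar m (chiJacobi m) (a * q) := by
    rw [tauChar, ← sum_range_comp_mul_of_coprime ham (periodic_tauChar_summand
      (chiJacobi_periodic m) q), tauChar, mul_sum]
    refine sum_congr rfl fun j _ => ?_
    simp only [chiJacobi, Nat.cast_mul, jacobiSym.mul_left, Int.cast_mul, Int.cast_natCast]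
    ring_nf
  rw [hshift, ← mul_assoc, ← sq, jacobiSym_natCast_sq_eq_one ham, one_mul]

theorem tauChar_chi4m {m : ℕ} (hm : Odd m) (q : ℕ) :
    tauChar (4 * m) (chi4m m) q =
      (jacobiSym (-1) m * I ^ q + (-I) ^ q) * tauChar m (chiJacobi m) q := by
  have hcop : Nat.Coprime 4 m := Nat.Coprime.pow_left 2 (Nat.coprime_two_left.mpr hm)
  rw [tauChar, sum_range_mul_eq_sum_sum_of_coprime hcop (periodic_tauChar_summand
    (chi4m_periodic m) q)]
  simp only [sum_range_succ, sum_range_zero, exp_two_pi_I_mul_add_div_four_mul hm.pos.ne']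
  have hodd := Nat.odd_iff.mp hm
  simp only [chi4m_mul_add_four_mul_of_even m (u := 0) (by decide),
    chi4m_mul_add_four_mul_of_even m (u := 2) (by decide),
    chi4m_mul_add_four_mul_of_odd hm (u := 1) (by decide),
    chi4m_mul_add_four_mul_of_odd hm (u := 3) (by decide), exp_two_pi_I_mul_div_four,
    jacobiSym_neg_one_eq_ite hm, zero_mul, sum_const_zero, zero_add, add_zero, tauChar, mul_sum,
    add_mul, ← sum_add_distrib]
  refine sum_congr rfl fun v _ => ?_
  rw [show I ^ (3 * q) = (-I) ^ q by rw [pow_mul, I_pow_three]]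
  split_ifs <;> first | omega | ring

theorem tauChar_chi4m_of_odd {m q : ℕ} (hm : Odd m) (hq : Odd q) :
    tauChar (4 * m) (chi4m m) q = (psiJ 1 m - psiJ (-1) m) * psiJ (-1) q * GJacobi m q := by
  rw [tauChar_chi4m hm, GJacobi, psiJ_of_odd _ hm, psiJ_of_odd _ hm, psiJ_of_odd _ hq,
    hq.neg_pow, I_pow_of_odd hq, jacobiSym.one_left]
  push_cast
  linear_combination (jacobiSym (-1) q * tauChar m (chiJacobi m) q * (1 + I) / 2) *
    jacobiSym_neg_one_sq hm

theorem tauChar_chi4m_two_mul {m q : ℕ} (hm : Odd m) (hq : Odd q) :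
    tauChar (4 * m) (chi4m m) (2 * q : ℕ) = -(psiJ 2 m + psiJ (-2) m) * GJacobi m q := by
  have hshift := tauChar_chiJacobi_natCast_mul (Nat.coprime_two_left.mpr hm) q
  push_cast at hshift
  rw [tauChar_chi4m hm, Nat.cast_mul, Nat.cast_ofNat, hshift, GJacobi, psiJ_of_odd _ hm,
    psiJ_of_odd _ hm, show (-2 : ℤ) = -1 * 2 by norm_num, jacobiSym.mul_left,
    Even.neg_pow ⟨q, by ring⟩, pow_mul, I_sq, hq.neg_one_pow]
  push_cast
  linear_combination (jacobiSym 2 m * tauChar m (chiJacobi m) q * (1 + I) / 2) *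
    jacobiSym_neg_one_sq hm

theorem tauChar_chi4m_four_mul {m : ℕ} (hm : Odd m) (q : ℕ) :
    tauChar (4 * m) (chi4m m) (4 * q : ℕ) = (psiJ 1 m + psiJ (-1) m) * GJacobi m q := by
  have hcop : Nat.Coprime 4 m := Nat.Coprime.pow_left 2 (Nat.coprime_two_left.mpr hm)
  have hshift := tauChar_chiJacobi_natCast_mul hcop q
  push_cast at hshift
  rw [tauChar_chi4m hm, Nat.cast_mul, Nat.cast_ofNat, hshift, GJacobi, psiJ_of_odd _ hm,
    psiJ_of_odd _ hm, jacobiSym.one_left, jacobiSym_four hm, Even.neg_pow ⟨2 * q, by ring⟩,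
    pow_mul, I_pow_four, one_pow]
  linear_combination -(tauChar m (chiJacobi m) q * (1 + I) / 2) * jacobiSym_neg_one_sq hm

theorem summable_pnat_rpow_mul_rpow {σ τ : ℝ} (hσ : σ < -1) (hτ : τ < -1) :
    Summable fun p : ℕ+ × ℕ+ => (p.1 : ℝ) ^ σ * (p.2 : ℝ) ^ τ :=
  have h {ρ : ℝ} (hρ : ρ < -1) : Summable fun n : ℕ+ => (n : ℝ) ^ ρ :=
    summable_pnat_iff_summable_nat.mpr (Real.summable_nat_rpow.mpr hρ)
  (h hσ).mul_of_nonneg (h hτ) (fun _ => by positivity) (fun _ => by positivity)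

theorem HasSum.indicator_odd_add_two_mul {α E : Type*} [AddCommMonoid E] [TopologicalSpace E]
    [ContinuousAdd E] {f : ℕ+ × α → E} {a b : E}
    (ha : HasSum ({p | Odd (p.1 : ℕ)}.indicator f) a)
    (hb : HasSum (fun p : ℕ+ × α => f (2 * p.1, p.2)) b) :
    HasSum f (a + b) := by
  have hdouble : Injective fun p : ℕ+ × α => (2 * p.1, p.2) := fun p p' h => by
    simp only [Prod.mk.injEq, mul_right_inj] at h
    exact Prod.ext h.1 h.2
  refine HasSum.add_isCompl isCompl_compl (hasSum_subtype_iff_indicator.mpr ha) ?_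
  rw [hasSum_subtype_iff_indicator, ← hdouble.hasSum_iff]
  · convert hb using 2 with p
    exact Set.indicator_of_mem (by simp [PNat.mul_coe]) f
  · rintro ⟨n, x⟩ hnx
    refine Set.indicator_of_notMem (fun hn => hnx ?_) f
    obtain ⟨k, hk⟩ := Nat.not_odd_iff_even.mp hn
    have hn0 := n.pos
    simp only at hk
    refine ⟨((⟨k, by omega⟩ : ℕ+), x), Prod.ext (PNat.eq ?_) rfl⟩
    rw [PNat.mul_coe, PNat.mk_coe, hk, PNat.val_ofNat, two_mul]

theorem norm_div_pnat_cpow_mul_cpow (a : ℂ) (x y : ℕ+) (u v : ℂ) :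
    ‖a / (((x : ℕ) : ℂ) ^ u * ((y : ℕ) : ℂ) ^ v)‖ =
      ‖a‖ * ((x : ℝ) ^ (-u.re) * (y : ℝ) ^ (-v.re)) := by
  rw [norm_div, norm_mul, norm_natCast_cpow_of_pos x.pos, norm_natCast_cpow_of_pos y.pos,
    Real.rpow_neg (by positivity), Real.rpow_neg (by positivity)]
  field_simp

theorem pnat_mul_rpow_neg (x : ℕ+) (a : ℝ) :
    (x : ℝ) * (x : ℝ) ^ (-a) = (x : ℝ) ^ (1 - a) := by
  rw [sub_eq_add_neg, Real.rpow_add (by positivity), Real.rpow_one]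

theorem pnat_mul_cpow (a q : ℕ+) (s : ℂ) :
    (((a * q : ℕ+) : ℕ) : ℂ) ^ s = ((a : ℕ) : ℂ) ^ s * ((q : ℕ) : ℂ) ^ s := by
  rw [PNat.mul_coe, Nat.cast_mul, natCast_mul_natCast_cpow]

theorem norm_C1term_le {ψ ψ' : ℕ → ℂ} (hψ : ∀ k, ‖ψ k‖ ≤ 1) (hψ' : ∀ k, ‖ψ' k‖ ≤ 1)
    (s w : ℂ) (p : ℕ+ × ℕ+) :
    ‖C1term s w ψ ψ' p‖ ≤ 2 * ((p.1 : ℝ) ^ (1 - w.re) * (p.2 : ℝ) ^ (-s.re)) := by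
  have hnum : ‖GJacobi p.1 p.2 * ψ p.1 * ψ' p.2‖ ≤ 2 * p.1 := by
    rw [norm_mul, norm_mul]
    calc _ ≤ 2 * (p.1 : ℝ) * 1 * 1 := by
          gcongr
          exacts [norm_GJacobi_le _ _, hψ _, hψ' _]
      _ = _ := by ring
  rw [C1term, norm_div_pnat_cpow_mul_cpow, ← pnat_mul_rpow_neg]
  calc _ ≤ 2 * (p.1 : ℝ) * ((p.1 : ℝ) ^ (-w.re) * (p.2 : ℝ) ^ (-s.re)) := by gcongr
    _ = _ := by ring

theorem summable_norm_C1term {s w : ℂ} (hs : 1 < s.re) (hw : 2 < w.re) {ψ ψ' : ℕ → ℂ}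
    (hψ : ∀ k, ‖ψ k‖ ≤ 1) (hψ' : ∀ k, ‖ψ' k‖ ≤ 1) :
    Summable fun lq => ‖C1term s w ψ ψ' lq‖ :=
  .of_nonneg_of_le (fun _ => norm_nonneg _) (norm_C1term_le hψ hψ' s w)
    ((summable_pnat_rpow_mul_rpow (by linarith) (by linarith)).mul_left 2)

theorem hasSum_C1term_swap {s w : ℂ} {ψ ψ' : ℕ → ℂ}
    (h : Summable fun lq => ‖C1term s w ψ ψ' lq‖) :
    HasSum (fun p : ℕ+ × ℕ+ => C1term s w ψ ψ' p.swap) (C1 s w ψ ψ') :=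
  (Equiv.prodComm ℕ+ ℕ+).hasSum_iff.mpr h.of_norm.hasSum

theorem C1term_psiJ_left_of_not_odd (s w : ℂ) (j : ℤ) (ψ' : ℕ → ℂ) {l q : ℕ+}
    (hl : ¬Odd (l : ℕ)) : C1term s w (psiJ j) ψ' (l, q) = 0 := by
  simp [C1term, psiJ_of_not_odd j hl]

theorem C1term_psiJ_right_of_not_odd (s w : ℂ) (ψ : ℕ → ℂ) (j : ℤ) {l q : ℕ+}
    (hq : ¬Odd (q : ℕ)) : C1term s w ψ (psiJ j) (l, q) = 0 := by
  simp [C1term, psiJ_of_not_odd j hq]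

noncomputable def tau4mTerm (s w : ℂ) (qm : ℕ+ × ℕ+) : ℂ :=
  if Odd (qm.2 : ℕ) then
    tauChar (4 * qm.2) (chi4m qm.2) qm.1 / (((qm.1 : ℕ) : ℂ) ^ s * ((qm.2 : ℕ) : ℂ) ^ w)
  else 0

theorem norm_tau4mTerm_le (s w : ℂ) (p : ℕ+ × ℕ+) :
    ‖tau4mTerm s w p‖ ≤ 4 * ((p.1 : ℝ) ^ (-s.re) * (p.2 : ℝ) ^ (1 - w.re)) := by
  unfold tau4mTerm
  split_ifs
  · have hnum : ‖tauChar (4 * p.2) (chi4m p.2) p.1‖ ≤ 4 * p.2 := by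
      simpa using norm_tauChar_le (n := 4 * p.2) (norm_chi4m_le p.2) p.1
    rw [norm_div_pnat_cpow_mul_cpow, ← pnat_mul_rpow_neg]
    calc _ ≤ 4 * (p.2 : ℝ) * ((p.1 : ℝ) ^ (-s.re) * (p.2 : ℝ) ^ (-w.re)) := by gcongr
      _ = _ := by ring
  · rw [norm_zero]; positivity

theorem summable_norm_tau4mTerm {s w : ℂ} (hs : 1 < s.re) (hw : 2 < w.re) :
    Summable fun qm => ‖tau4mTerm s w qm‖ :=
  .of_nonneg_of_le (fun _ => norm_nonneg _) (norm_tau4mTerm_le s w)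
    ((summable_pnat_rpow_mul_rpow (by linarith) (by linarith)).mul_left 4)

theorem tau4mTerm_of_not_odd (s w : ℂ) (q : ℕ+) {m : ℕ+} (hm : ¬Odd (m : ℕ)) :
    tau4mTerm s w (q, m) = 0 := if_neg hm

theorem indicator_odd_tau4mTerm (s w : ℂ) (p : ℕ+ × ℕ+) :
    {p : ℕ+ × ℕ+ | Odd (p.1 : ℕ)}.indicator (tau4mTerm s w) p =
      C1term s w (psiJ 1) (psiJ (-1)) p.swap - C1term s w (psiJ (-1)) (psiJ (-1)) p.swap := by
  obtain ⟨q, m⟩ := p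
  by_cases hq : Odd (q : ℕ)
  · rw [Set.indicator_of_mem (by exact hq)]
    by_cases hm : Odd (m : ℕ)
    · simp only [tau4mTerm, C1term, Prod.swap, if_pos hm, tauChar_chi4m_of_odd hm hq]
      ring
    · simp [tau4mTerm_of_not_odd s w q hm, C1term_psiJ_left_of_not_odd s w _ _ hm]
  · simp [hq, C1term_psiJ_right_of_not_odd s w _ _ hq]

theorem indicator_odd_tau4mTerm_two_mul (s w : ℂ) (p : ℕ+ × ℕ+) :
    {p : ℕ+ × ℕ+ | Odd (p.1 : ℕ)}.indicator (fun p => tau4mTerm s w (2 * p.1, p.2)) p =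
      -(2 : ℂ) ^ (-s) * (C1term s w (psiJ 2) (psiJ 1) p.swap +
        C1term s w (psiJ (-2)) (psiJ 1) p.swap) := by
  obtain ⟨q, m⟩ := p
  by_cases hq : Odd (q : ℕ)
  · rw [Set.indicator_of_mem (by exact hq)]
    by_cases hm : Odd (m : ℕ)
    · dsimp only [tau4mTerm]
      rw [if_pos hm, pnat_mul_cpow, PNat.mul_coe, PNat.val_ofNat, tauChar_chi4m_two_mul hm hq]
      simp only [C1term, Prod.swap, psiJ_of_odd 1 hq, jacobiSym.one_left, cpow_neg]
      push_cast
      ring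
    · simp [tau4mTerm_of_not_odd s w _ hm, C1term_psiJ_left_of_not_odd s w _ _ hm]
  · simp [hq, C1term_psiJ_right_of_not_odd s w _ _ hq]

theorem tau4mTerm_four_mul (s w : ℂ) (q m : ℕ+) :
    tau4mTerm s w (4 * q, m) =
      (4 : ℂ) ^ (-s) *
        (C1term s w (psiJ 1) psi0 (m, q) + C1term s w (psiJ (-1)) psi0 (m, q)) := by
  by_cases hm : Odd (m : ℕ)
  · dsimp only [tau4mTerm]
    rw [if_pos hm, pnat_mul_cpow, PNat.mul_coe, PNat.val_ofNat, tauChar_chi4m_four_mul hm]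
    simp only [C1term, psi0, cpow_neg]
    push_cast
    ring
  · simp [tau4mTerm_of_not_odd s w _ hm, C1term_psiJ_left_of_not_odd s w _ _ hm]

theorem C1_decomposition (s w : ℂ) (hs : 2 < s.re) (hw : 2 < w.re) :
    Summable (fun qm : ℕ+ × ℕ+ =>
      ‖if Odd (qm.2 : ℕ) then
          tauChar (4 * qm.2) (chi4m qm.2) qm.1 / (((qm.1 : ℕ) : ℂ) ^ s * ((qm.2 : ℕ) : ℂ) ^ w)
        else 0‖) ∧
    Summable (fun lq => ‖C1term s w (psiJ 2) (psiJ 1) lq‖) ∧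
    Summable (fun lq => ‖C1term s w (psiJ (-2)) (psiJ 1) lq‖) ∧
    Summable (fun lq => ‖C1term s w (psiJ 1) psi0 lq‖) ∧
    Summable (fun lq => ‖C1term s w (psiJ (-1)) psi0 lq‖) ∧
    Summable (fun lq => ‖C1term s w (psiJ 1) (psiJ (-1)) lq‖) ∧
    Summable (fun lq => ‖C1term s w (psiJ (-1)) (psiJ (-1)) lq‖) ∧
    (∑' qm : ℕ+ × ℕ+,
        if Odd (qm.2 : ℕ) then
          tauChar (4 * qm.2) (chi4m qm.2) qm.1 / (((qm.1 : ℕ) : ℂ) ^ s * ((qm.2 : ℕ) : ℂ) ^ w)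
        else 0) =
      -(2 : ℂ) ^ (-s) * (C1 s w (psiJ 2) (psiJ 1) + C1 s w (psiJ (-2)) (psiJ 1)) +
        (4 : ℂ) ^ (-s) * (C1 s w (psiJ 1) psi0 + C1 s w (psiJ (-1)) psi0) +
        C1 s w (psiJ 1) (psiJ (-1)) - C1 s w (psiJ (-1)) (psiJ (-1)) := by
  have hs1 : 1 < s.re := by linarith
  have h21 := summable_norm_C1term hs1 hw (norm_psiJ_le 2) (norm_psiJ_le 1)
  have h21' := summable_norm_C1term hs1 hw (norm_psiJ_le (-2)) (norm_psiJ_le 1)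
  have h10 := summable_norm_C1term hs1 hw (norm_psiJ_le 1) norm_psi0_le
  have h10' := summable_norm_C1term hs1 hw (norm_psiJ_le (-1)) norm_psi0_le
  have h11 := summable_norm_C1term hs1 hw (norm_psiJ_le 1) (norm_psiJ_le (-1))
  have h11' := summable_norm_C1term hs1 hw (norm_psiJ_le (-1)) (norm_psiJ_le (-1))
  refine ⟨summable_norm_tau4mTerm hs1 hw, h21, h21', h10, h10', h11, h11', ?_⟩
  have hodd := ((hasSum_C1term_swap h11).sub (hasSum_C1term_swap h11')).congr_fun
    (indicator_odd_tau4mTerm s w)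
  have htwo := (((hasSum_C1term_swap h21).add (hasSum_C1term_swap h21')).mul_left
    (-(2 : ℂ) ^ (-s))).congr_fun (indicator_odd_tau4mTerm_two_mul s w)
  have hfour : HasSum (fun p : ℕ+ × ℕ+ => tau4mTerm s w (2 * (2 * p.1), p.2))
      ((4 : ℂ) ^ (-s) * (C1 s w (psiJ 1) psi0 + C1 s w (psiJ (-1)) psi0)) :=
    (((hasSum_C1term_swap h10).add (hasSum_C1term_swap h10')).mul_left _).congr_fun
      fun p => by rw [← mul_assoc]; exact tau4mTerm_four_mul s w p.1 p.2
  show ∑' p, tau4mTerm s w p = _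
  rw [(hodd.indicator_odd_add_two_mul (htwo.indicator_odd_add_two_mul hfour)).tsum_eq]
  ring
end

section
/- Let p be an odd prime, let q_1 be a squarefree positive integer with p | q_1, let j ∈ {1, −1, 2, −2}, and let ψ = ψ_j. Then for every complex number w, all terms with l = 1 and with l ≥ 3 in the following series vanish and Σ_{l = 0}^∞ ψ(p^l)·G(χ_{p^l}, q_1)·p^{−lw} = 1 − ψ(p)²·p^{1 − 2w}. -/
open Complex

/-!
`χ_{p^l} = (·/p)^l` is `p`-periodic, so splitting `j = p y + x` factors `τ(χ_{p^l}, q)` as a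
geometric sum `∑_{y < p^{l-1}} e(qy/p^{l-1})` times a sum over one period. As `p ∥ q`, the
geometric sum vanishes for `l ≥ 3`; for `l = 1` the Gauss sum is the full character sum
`∑ (x/p) = 0`; for `l = 2` it is `p · (∑_{x<p} e(xq/p²) - 1) = -p`, and the normalizing factor
of `G` is `1` because `(−1/p²) = 1`. Only the terms `l = 0, 2` of the series survive.
-/

open Finset
open scoped Real

lemma exp_two_pi_I_mul_div_eq_one_iff {n : ℕ} (hn : n ≠ 0) (q : ℤ) :
    exp (2 * π * I * q / n) = 1 ↔ (n : ℤ) ∣ q := by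
  rw [exp_eq_one_iff]
  constructor
  · rintro ⟨k, hk⟩
    field_simp at hk
    exact ⟨k, by exact_mod_cast hk⟩
  · rintro ⟨k, rfl⟩
    exact ⟨k, by push_cast; field_simp⟩

lemma exp_two_pi_I_mul_div_pow_self (n : ℕ) (q : ℤ) : exp (2 * π * I * q / n) ^ n = 1 := by
  rcases eq_or_ne n 0 with rfl | hn
  · simp
  rw [← exp_nat_mul, exp_eq_one_iff]
  exact ⟨q, by field_simp⟩

lemma exp_two_pi_I_mul_div_mul_pow (m k : ℕ) (hm : m ≠ 0) (q : ℤ) :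
    exp (2 * π * I * q / (m * k : ℕ)) ^ m = exp (2 * π * I * q / k) := by
  rw [← exp_nat_mul]
  congr 1
  push_cast
  field_simp

lemma exp_two_pi_I_mul_mul_div_mul (m k : ℕ) (hm : m ≠ 0) (r : ℤ) :
    exp (2 * π * I * (m * r : ℤ) / (m * k : ℕ)) = exp (2 * π * I * r / k) := by
  congr 1
  push_cast
  field_simp

lemma geom_sum_exp_two_pi_I_mul_div (k : ℕ) (q : ℤ) [Decidable ((k : ℤ) ∣ q)] :
    ∑ y ∈ range k, exp (2 * π * I * q / k) ^ y = if (k : ℤ) ∣ q then (k : ℂ) else 0 := by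
  rcases eq_or_ne k 0 with rfl | hk
  · simp
  split_ifs with h
  · simp [(exp_two_pi_I_mul_div_eq_one_iff hk q).mpr h]
  · rw [geom_sum_eq (mt (exp_two_pi_I_mul_div_eq_one_iff hk q).mp h),
      exp_two_pi_I_mul_div_pow_self, sub_self, zero_div]

lemma tauChar_eq_sum_pow (n : ℕ) (χ : ℕ → ℂ) (q : ℤ) :
    tauChar n χ q = ∑ j ∈ range n, χ j * exp (2 * π * I * q / n) ^ j := by
  refine sum_congr rfl fun j _ => ?_
  rw [← exp_nat_mul]
  ring_nf

lemma sum_range_mul_eq_sum_sum {M : Type*} [AddCommMonoid M] (f : ℕ → M) (m k : ℕ) :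
    ∑ j ∈ range (m * k), f j = ∑ y ∈ range k, ∑ x ∈ range m, f (m * y + x) := by
  induction k with
  | zero => simp
  | succ k ih => rw [Nat.mul_succ, sum_range_add, ih, sum_range_succ]

lemma sum_range_mul_periodic_mul_pow {χ : ℕ → ℂ} {m : ℕ} (hχ : Function.Periodic χ m)
    (k : ℕ) (ζ : ℂ) :
    ∑ j ∈ range (m * k), χ j * ζ ^ j
      = (∑ y ∈ range k, (ζ ^ m) ^ y) * ∑ x ∈ range m, χ x * ζ ^ x := by
  rw [sum_range_mul_eq_sum_sum, sum_mul]
  refine sum_congr rfl fun y _ => ?_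
  rw [mul_sum]
  refine sum_congr rfl fun x _ => ?_
  have hshift : χ (x + y * m) = χ x := by simpa using hχ.nat_mul y x
  rw [add_comm, mul_comm m y, hshift, pow_add, pow_mul]
  ring

lemma tauChar_mul_of_periodic {χ : ℕ → ℂ} {m : ℕ} (hχ : Function.Periodic χ m) (hm : m ≠ 0)
    (k : ℕ) (q : ℤ) [Decidable ((k : ℤ) ∣ q)] :
    tauChar (m * k) χ q
      = (if (k : ℤ) ∣ q then (k : ℂ) else 0)
        * ∑ x ∈ range m, χ x * exp (2 * π * I * q / (m * k : ℕ)) ^ x := by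
  rw [tauChar_eq_sum_pow, sum_range_mul_periodic_mul_pow hχ, exp_two_pi_I_mul_div_mul_pow m k hm,
    geom_sum_exp_two_pi_I_mul_div]

lemma tauChar_of_dvd {n : ℕ} (χ : ℕ → ℂ) {q : ℤ} (h : (n : ℤ) ∣ q) :
    tauChar n χ q = ∑ j ∈ range n, χ j := by
  rcases eq_or_ne n 0 with rfl | hn
  · simp [tauChar]
  simp [tauChar_eq_sum_pow, (exp_two_pi_I_mul_div_eq_one_iff hn q).mpr h]

lemma chiJacobi_pow_periodic (p l : ℕ) : Function.Periodic (chiJacobi (p ^ l)) p := by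
  intro x
  simp only [chiJacobi, jacobiSym.pow_right]
  push_cast
  rw [jacobiSym.mod_left' (Int.add_emod_right _ _)]

lemma sum_range_chiJacobi_prime {p : ℕ} (hp : p.Prime) (hp2 : p ≠ 2) :
    ∑ x ∈ range p, chiJacobi p x = 0 := by
  have : Fact p.Prime := ⟨hp⟩
  have hchar : ringChar (ZMod p) ≠ 2 := by rwa [ZMod.ringChar_zmod_n]
  have hsum : ∑ x ∈ range p, jacobiSym x p = ∑ a : ZMod p, quadraticChar (ZMod p) a := by
    refine sum_nbij' (fun x => (x : ZMod p)) (fun a => a.val) (fun _ _ => mem_univ _)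
      (fun a _ => mem_range.mpr (ZMod.val_lt a))
      (fun x hx => ZMod.val_cast_of_lt (mem_range.mp hx))
      (fun a _ => ZMod.natCast_zmod_val a) fun x _ => ?_
    rw [← jacobiSym.legendreSym.to_jacobiSym, legendreSym, Int.cast_natCast]
  simp only [chiJacobi]
  exact_mod_cast hsum.trans (quadraticChar_sum_zero hchar)

lemma chiJacobi_prime_sq_of_lt {p x : ℕ} (hp : p.Prime) (hx : x < p) :
    chiJacobi (p ^ 2) x = if x = 0 then 0 else 1 := by
  split_ifs with hx0
  · subst hx0
    simp [chiJacobi, jacobiSym.zero_left (Nat.one_lt_pow two_ne_zero hp.one_lt)]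
  · have hcop : Int.gcd x p = 1 :=
      Nat.Coprime.symm ((hp.coprime_iff_not_dvd).mpr (Nat.not_dvd_of_pos_of_lt
        (Nat.pos_of_ne_zero hx0) hx))
    simp only [chiJacobi, jacobiSym.pow_right, jacobiSym.sq_one hcop, Int.cast_one]

lemma tauChar_chiJacobi_prime_of_dvd {p : ℕ} {q : ℤ} (hp : p.Prime) (hp2 : p ≠ 2)
    (hpq : (p : ℤ) ∣ q) : tauChar p (chiJacobi p) q = 0 := by
  rw [tauChar_of_dvd _ hpq, sum_range_chiJacobi_prime hp hp2]

lemma tauChar_chiJacobi_prime_sq {p : ℕ} {q : ℤ} (hp : p.Prime) (hpq : (p : ℤ) ∣ q)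
    (hpq2 : ¬ (p : ℤ) ^ 2 ∣ q) : tauChar (p ^ 2) (chiJacobi (p ^ 2)) q = -p := by
  obtain ⟨r, rfl⟩ := hpq
  have hpr : ¬ (p : ℤ) ∣ r := fun h => hpq2 (sq (p : ℤ) ▸ mul_dvd_mul_left _ h)
  set ω := exp (2 * π * I * r / p)
  have hterm : ∀ x ∈ range p, chiJacobi (p ^ 2) x * ω ^ x = ω ^ x - if x = 0 then 1 else 0 := by
    intro x hx
    rw [chiJacobi_prime_sq_of_lt hp (mem_range.mp hx)]
    split_ifs <;> simp_all
  nth_rewrite 1 [sq]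
  rw [tauChar_mul_of_periodic (chiJacobi_pow_periodic p 2) hp.ne_zero,
    exp_two_pi_I_mul_mul_div_mul p p hp.ne_zero, if_pos (dvd_mul_right _ _),
    sum_congr rfl hterm, sum_sub_distrib, geom_sum_exp_two_pi_I_mul_div, if_neg hpr,
    sum_ite_eq', if_pos (mem_range.mpr hp.pos)]
  ring

lemma tauChar_chiJacobi_pow_succ_eq_zero {p l : ℕ} {q : ℤ} (hp : p ≠ 0)
    (hpq : ¬ (p : ℤ) ^ l ∣ q) : tauChar (p ^ (l + 1)) (chiJacobi (p ^ (l + 1))) q = 0 := by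
  nth_rewrite 1 [pow_succ']
  rw [tauChar_mul_of_periodic (chiJacobi_pow_periodic p (l + 1)) hp, Nat.cast_pow,
    if_neg hpq, zero_mul]

lemma GJacobi_sq (n : ℕ) (q : ℤ) : GJacobi (n ^ 2) q = tauChar (n ^ 2) (chiJacobi (n ^ 2)) q := by
  have hsign : jacobiSym (-1) (n ^ 2) = 1 := by
    rw [jacobiSym.pow_right]
    exact jacobiSym.sq_one (by simp)
  rw [GJacobi, hsign, Int.cast_one]
  ring

lemma GJacobi_one (q : ℤ) : GJacobi 1 q = 1 := by
  simpa [tauChar, chiJacobi] using GJacobi_sq 1 q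

lemma psiJ_pow (j : ℤ) (n l : ℕ) : psiJ j (n ^ l) = psiJ j n ^ l := by
  rcases l.eq_zero_or_pos with rfl | hl
  · simp [psiJ]
  rcases Nat.even_or_odd n with hn | hn
  · simp [psiJ, Nat.not_odd_iff_even.mpr hn, Nat.not_odd_iff_even.mpr (hn.pow_of_ne_zero hl.ne'),
      hl.ne']
  · simp [psiJ, hn, hn.pow, jacobiSym.pow_right]

theorem local_factor_at_p_dividing_general (p : ℕ) (hp : p.Prime) (hpodd : Odd p)
    (q₁ : ℕ) (hsf : Squarefree q₁) (hpq : p ∣ q₁)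
    (j : ℤ) (w : ℂ) :
    (psiJ j (p ^ 1) * GJacobi (p ^ 1) q₁ / ((p : ℂ) ^ ((1 : ℂ) * w)) = 0) ∧
    (∀ l : ℕ, 3 ≤ l → psiJ j (p ^ l) * GJacobi (p ^ l) q₁ / ((p : ℂ) ^ ((l : ℂ) * w)) = 0) ∧
    (∑' l : ℕ, psiJ j (p ^ l) * GJacobi (p ^ l) q₁ / ((p : ℂ) ^ ((l : ℂ) * w))) =
      1 - (psiJ j p) ^ 2 * (p : ℂ) ^ (1 - 2 * w) := by
  have hdvd : (p : ℤ) ∣ q₁ := Int.natCast_dvd_natCast.mpr hpq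
  have hsq : ¬ (p : ℤ) ^ 2 ∣ q₁ := by
    rw [sq]
    exact_mod_cast (Nat.squarefree_iff_prime_squarefree.mp hsf) p hp
  have h1 : psiJ j (p ^ 1) * GJacobi (p ^ 1) q₁ / ((p : ℂ) ^ ((1 : ℂ) * w)) = 0 := by
    simp [GJacobi, tauChar_chiJacobi_prime_of_dvd hp (hpodd.ne_two_of_dvd_nat dvd_rfl) hdvd]
  have h3 : ∀ l : ℕ, 3 ≤ l →
      psiJ j (p ^ l) * GJacobi (p ^ l) q₁ / ((p : ℂ) ^ ((l : ℂ) * w)) = 0 := by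
    intro l hl
    obtain ⟨k, rfl⟩ := Nat.exists_eq_add_of_le' (show 1 ≤ l by omega)
    have hk : ¬ (p : ℤ) ^ k ∣ q₁ := fun h => hsq ((pow_dvd_pow _ (by omega)).trans h)
    simp [GJacobi, tauChar_chiJacobi_pow_succ_eq_zero hp.ne_zero hk]
  refine ⟨h1, h3, ?_⟩
  rw [tsum_eq_sum (s := range 3) fun l hl => h3 l (by simpa using hl), sum_range_succ, sum_range_succ, sum_range_one, Nat.cast_one, h1, psiJ_pow, psiJ_pow,
    GJacobi_sq, tauChar_chiJacobi_prime_sq hp hdvd hsq,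
    Complex.cpow_sub _ _ (Nat.cast_ne_zero.mpr hp.ne_zero), Complex.cpow_one]
  simp only [pow_zero, GJacobi_one, Nat.cast_zero, zero_mul, Complex.cpow_zero]
  push_cast
  ring

theorem local_factor_at_p_dividing (p : ℕ) (hp : p.Prime) (hpodd : Odd p)
    (q₁ : ℕ) (hq₁ : 0 < q₁) (hsf : Squarefree q₁) (hpq : p ∣ q₁)
    (j : ℤ) (hj : j = 1 ∨ j = -1 ∨ j = 2 ∨ j = -2) (w : ℂ) :
    (psiJ j (p ^ 1) * GJacobi (p ^ 1) q₁ / ((p : ℂ) ^ ((1 : ℂ) * w)) = 0) ∧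
    (∀ l : ℕ, 3 ≤ l → psiJ j (p ^ l) * GJacobi (p ^ l) q₁ / ((p : ℂ) ^ ((l : ℂ) * w)) = 0) ∧
    (∑' l : ℕ, psiJ j (p ^ l) * GJacobi (p ^ l) q₁ / ((p : ℂ) ^ ((l : ℂ) * w))) =
      1 - (psiJ j p) ^ 2 * (p : ℂ) ^ (1 - 2 * w) :=
  local_factor_at_p_dividing_general p hp hpodd q₁ hsf hpq j w
end
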